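/- Assume Λ ≥ 0, e ≠ 0, and that U contains a point with θ ≠ π/2 and 3Λr⁴ ≠ e². Then the RNdS spacetime admits neither Ricci inheritance nor Ricci collineation with respect to the non-Killing vector field ∂/∂θ: there is no smooth function 𝒢 : U → ℝ such that (£_{∂/∂θ} Ric)_{ij} = 𝒢·Ric_{ij} on U for all i,j ∈ {1,2,3,4}; in particular £_{∂/∂θ} Ric is not identically zero on U. -/

import Mathlib

noncomputable section

open Real

/-- The metric function f(r) = 1 - 2M/r + e²/r² - Λr² of the RNdS metric. -/
def fRN (M e Λ r : ℝ) : ℝ := 1 - 2*M/r + e^2/r^2 - Λ*r^2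

/-- The coordinate domain condition: r > 0, 0 < θ < π, f(r) ≠ 0.
Coordinates: p 0 = t, p 1 = r, p 2 = θ, p 3 = φ. -/
def RNdSDomain (M e Λ : ℝ) : Set (Fin 4 → ℝ) :=
  {p | 0 < p 1 ∧ 0 < p 2 ∧ p 2 < Real.pi ∧ fRN M e Λ (p 1) ≠ 0}

/-- Partial derivative of a scalar function on ℝ⁴ in the i-th coordinate direction. -/
def pd (i : Fin 4) (F : (Fin 4 → ℝ) → ℝ) (p : Fin 4 → ℝ) : ℝ :=
  fderiv ℝ F p (Pi.single i 1)

/-- The Reissner–Nordström–de Sitter metric components g_{ij}. -/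
def gMet (M e Λ : ℝ) (p : Fin 4 → ℝ) (i j : Fin 4) : ℝ :=
  if i = j then
    if i = 0 then -(fRN M e Λ (p 1))
    else if i = 1 then (fRN M e Λ (p 1))⁻¹
    else if i = 2 then (p 1)^2
    else (p 1)^2 * (Real.sin (p 2))^2
  else 0

/-- The pointwise inverse metric g^{ij} (diagonal). -/
def gInv (M e Λ : ℝ) (p : Fin 4 → ℝ) (i j : Fin 4) : ℝ :=
  if i = j then (gMet M e Λ p i i)⁻¹ else 0

/-- Christoffel symbols of the second kind Γ^k_{ij}. -/
def Chr (M e Λ : ℝ) (k i j : Fin 4) (p : Fin 4 → ℝ) : ℝ :=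
  (1/2) * ∑ l, gInv M e Λ p k l *
    (pd i (fun q => gMet M e Λ q j l) p + pd j (fun q => gMet M e Λ q i l) p
      - pd l (fun q => gMet M e Λ q i j) p)

/-- The (0,4) Riemann curvature tensor R_{hijk}. -/
def Riem (M e Λ : ℝ) (p : Fin 4 → ℝ) (h i j k : Fin 4) : ℝ :=
  ∑ α, gMet M e Λ p h α *
    (pd k (Chr M e Λ α i j) p - pd j (Chr M e Λ α i k) p
      + ∑ β, (Chr M e Λ β i j p * Chr M e Λ α β k p - Chr M e Λ β i k p * Chr M e Λ α β j p))

/-- The Ricci tensor Ric_{ij} = g^{hk} R_{hijk}. -/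
def RicT (M e Λ : ℝ) (p : Fin 4 → ℝ) (i j : Fin 4) : ℝ :=
  ∑ h, ∑ k, gInv M e Λ p h k * Riem M e Λ p h i j k

/-- The scalar curvature κ = g^{ij} Ric_{ij}. -/
def scalC (M e Λ : ℝ) (p : Fin 4 → ℝ) : ℝ :=
  ∑ i, ∑ j, gInv M e Λ p i j * RicT M e Λ p i j

/-- Kulkarni–Nomizu product of two (0,2) tensors. -/
def KN (A B : (Fin 4 → ℝ) → Fin 4 → Fin 4 → ℝ) (p : Fin 4 → ℝ) (i j k l : Fin 4) : ℝ :=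
  A p i l * B p j k + A p j k * B p i l - A p i k * B p j l - A p j l * B p i k

/-- The conformal curvature tensor C = R - (1/2)(g ∧ Ric) + (κ/12)(g ∧ g). -/
def confC (M e Λ : ℝ) (p : Fin 4 → ℝ) (h i j k : Fin 4) : ℝ :=
  Riem M e Λ p h i j k - (1/2) * KN (gMet M e Λ) (RicT M e Λ) p h i j k
    + (scalC M e Λ p / 12) * KN (gMet M e Λ) (gMet M e Λ) p h i j k

/-- The conharmonic curvature tensor K = R - (1/2)(g ∧ Ric). -/
def conhK (M e Λ : ℝ) (p : Fin 4 → ℝ) (h i j k : Fin 4) : ℝ :=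
  Riem M e Λ p h i j k - (1/2) * KN (gMet M e Λ) (RicT M e Λ) p h i j k

/-- The concircular curvature tensor W = R - (κ/24)(g ∧ g). -/
def concW (M e Λ : ℝ) (p : Fin 4 → ℝ) (h i j k : Fin 4) : ℝ :=
  Riem M e Λ p h i j k - (scalC M e Λ p / 24) * KN (gMet M e Λ) (gMet M e Λ) p h i j k

/-- The projective curvature tensor P_{hijk} = R_{hijk} - (1/3)(g_{hk}Ric_{ij} - g_{ik}Ric_{hj}). -/
def projP (M e Λ : ℝ) (p : Fin 4 → ℝ) (h i j k : Fin 4) : ℝ :=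
  Riem M e Λ p h i j k
    - (1/3) * (gMet M e Λ p h k * RicT M e Λ p i j - gMet M e Λ p i k * RicT M e Λ p h j)

/-- Index raised (0,4) tensor: B^α_{ijk} = g^{αh} B_{hijk}. -/
def upIdx (M e Λ : ℝ) (B : (Fin 4 → ℝ) → Fin 4 → Fin 4 → Fin 4 → Fin 4 → ℝ)
    (p : Fin 4 → ℝ) (α i j k : Fin 4) : ℝ :=
  ∑ h, gInv M e Λ p α h * B p h i j k

/-- The (0,6) tensor B·Y for a (0,4) tensor Y. -/
def dot4 (M e Λ : ℝ) (B Y : (Fin 4 → ℝ) → Fin 4 → Fin 4 → Fin 4 → Fin 4 → ℝ)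
    (p : Fin 4 → ℝ) (a b c d w s : Fin 4) : ℝ :=
  -(∑ α, upIdx M e Λ B p α a w s * Y p α b c d)
  - (∑ α, upIdx M e Λ B p α b w s * Y p a α c d)
  - (∑ α, upIdx M e Λ B p α c w s * Y p a b α d)
  - (∑ α, upIdx M e Λ B p α d w s * Y p a b c α)

/-- The (0,4) tensor B·Y for a (0,2) tensor Y. -/
def dot2 (M e Λ : ℝ) (B : (Fin 4 → ℝ) → Fin 4 → Fin 4 → Fin 4 → Fin 4 → ℝ)
    (Y : (Fin 4 → ℝ) → Fin 4 → Fin 4 → ℝ)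
    (p : Fin 4 → ℝ) (a b w s : Fin 4) : ℝ :=
  -(∑ α, upIdx M e Λ B p α a w s * Y p α b)
  - (∑ α, upIdx M e Λ B p α b w s * Y p a α)

/-- The Tachibana tensor Q(A,Y) for a (0,4) tensor Y. -/
def tach4 (A : (Fin 4 → ℝ) → Fin 4 → Fin 4 → ℝ)
    (Y : (Fin 4 → ℝ) → Fin 4 → Fin 4 → Fin 4 → Fin 4 → ℝ)
    (p : Fin 4 → ℝ) (a b c d w s : Fin 4) : ℝ :=
  (A p s a * Y p w b c d - A p w a * Y p s b c d)
  + (A p s b * Y p a w c d - A p w b * Y p a s c d)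
  + (A p s c * Y p a b w d - A p w c * Y p a b s d)
  + (A p s d * Y p a b c w - A p w d * Y p a b c s)

/-- The Tachibana tensor Q(A,Y) for a (0,2) tensor Y. -/
def tach2 (A Y : (Fin 4 → ℝ) → Fin 4 → Fin 4 → ℝ)
    (p : Fin 4 → ℝ) (a b w s : Fin 4) : ℝ :=
  (A p s a * Y p w b - A p w a * Y p s b)
  + (A p s b * Y p a w - A p w b * Y p a s)

/-- A symmetric (0,2) tensor A is B-compatible at p for a (0,4) tensor B. -/
def compatAt (M e Λ : ℝ) (A : (Fin 4 → ℝ) → Fin 4 → Fin 4 → ℝ)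
    (B : (Fin 4 → ℝ) → Fin 4 → Fin 4 → Fin 4 → Fin 4 → ℝ) (p : Fin 4 → ℝ) : Prop :=
  ∀ i j k l : Fin 4,
    ∑ α, ∑ β, gInv M e Λ p α β *
      (A p i α * B p β l j k + A p j α * B p β l k i + A p k α * B p β l i j) = 0

/-- Covariant derivative (∇_a B)_{hijk} of a (0,4) tensor. -/
def covD4 (M e Λ : ℝ) (B : (Fin 4 → ℝ) → Fin 4 → Fin 4 → Fin 4 → Fin 4 → ℝ)
    (a : Fin 4) (p : Fin 4 → ℝ) (h i j k : Fin 4) : ℝ :=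
  pd a (fun q => B q h i j k) p
  - (∑ β, Chr M e Λ β a h p * B p β i j k)
  - (∑ β, Chr M e Λ β a i p * B p h β j k)
  - (∑ β, Chr M e Λ β a j p * B p h i β k)
  - (∑ β, Chr M e Λ β a k p * B p h i j β)

/-- The energy–momentum tensor T = Ric - (κ/2) g + Λ g (units 8πG/c⁴ = 1). -/
def emT (M e Λ : ℝ) (p : Fin 4 → ℝ) (i j : Fin 4) : ℝ :=
  RicT M e Λ p i j - (scalC M e Λ p / 2) * gMet M e Λ p i j + Λ * gMet M e Λ p i j

end


/-!
On the domain, `Ric_θθ = e²/r² + 3Λr²` and `Ric_φφ = Ric_θθ sin²θ`, so `∂_θ Ric_θθ = 0` while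
`∂_θ Ric_φφ = 2 Ric_θθ sin θ cos θ`. For `e ≠ 0` and `Λ ≥ 0` we have `Ric_θθ > 0`; hence at a point
off the equator `θ = π/2` the θθ-component of `∂_θ Ric = 𝒢 Ric` forces `𝒢 = 0`, and then its
φφ-component fails.
-/

open Real Filter Topology

noncomputable def fRN' (M e Λ r : ℝ) : ℝ := 2*M/r^2 - 2*e^2/r^3 - 2*Λ*r

lemma hasDerivAt_fRN {M e Λ r : ℝ} (hr : r ≠ 0) :
    HasDerivAt (fRN M e Λ) (fRN' M e Λ r) r := by
  have h := (((hasDerivAt_const r (1:ℝ)).sub ((hasDerivAt_inv hr).const_mul (2*M))).add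
      (((hasDerivAt_pow 2 r).inv (pow_ne_zero 2 hr)).const_mul (e^2))).sub
      ((hasDerivAt_pow 2 r).const_mul Λ)
  refine h.congr_deriv ?_
  simp only [fRN']
  field_simp
  ring

lemma isOpen_RNdSDomain (M e Λ : ℝ) : IsOpen (RNdSDomain M e Λ) := by
  refine isOpen_iff_mem_nhds.2 fun q ⟨hr, hθ₀, hθπ, hf⟩ => ?_
  have hr' : ContinuousAt (fun q : Fin 4 → ℝ => q 1) q := (continuous_apply 1).continuousAt
  have hθ' : ContinuousAt (fun q : Fin 4 → ℝ => q 2) q := (continuous_apply 2).continuousAt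
  have hf' : ContinuousAt (fun q : Fin 4 → ℝ => fRN M e Λ (q 1)) q :=
    (hasDerivAt_fRN hr.ne').continuousAt.comp (f := fun q : Fin 4 → ℝ => q 1) hr'
  filter_upwards [continuousAt_const.eventually_lt hr' hr, continuousAt_const.eventually_lt hθ' hθ₀,
    hθ'.eventually_lt continuousAt_const hθπ, hf'.eventually_ne hf] with q' h₁ h₂ h₃ h₄
  exact ⟨h₁, h₂, h₃, h₄⟩

lemma sin_pos_of_mem_RNdSDomain {M e Λ : ℝ} {p : Fin 4 → ℝ} (hp : p ∈ RNdSDomain M e Λ) :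
    0 < sin (p 2) :=
  sin_pos_of_pos_of_lt_pi hp.2.1 hp.2.2.1

lemma hasDerivAt_sin_sq (x : ℝ) : HasDerivAt (fun t => sin t ^ 2) (2 * sin x * cos x) x := by
  simpa using (hasDerivAt_sin x).fun_pow 2

section PartialDerivatives

variable {p : Fin 4 → ℝ}

lemma pd_congr {F G : (Fin 4 → ℝ) → ℝ} (h : F =ᶠ[𝓝 p] G) (i : Fin 4) : pd i F p = pd i G p := by
  rw [pd, pd, h.fderiv_eq]

lemma pd_const (c : ℝ) (i : Fin 4) : pd i (fun _ => c) p = 0 := by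
  simp [pd]

lemma hasFDerivAt_comp_apply {a : ℝ → ℝ} {a' : ℝ} {k : Fin 4} (h : HasDerivAt a a' (p k)) :
    HasFDerivAt (fun q => a (q k))
      (a' • ContinuousLinearMap.proj (R := ℝ) (φ := fun _ : Fin 4 => ℝ) k) p :=
  h.comp_hasFDerivAt (f := fun q : Fin 4 → ℝ => q k) p (hasFDerivAt_apply k p)

lemma pd_comp_apply {a : ℝ → ℝ} {a' : ℝ} {k : Fin 4} (h : HasDerivAt a a' (p k)) (i : Fin 4) :
    pd i (fun q => a (q k)) p = if k = i then a' else 0 := by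
  rw [pd, (hasFDerivAt_comp_apply h).fderiv]
  simp [Pi.single_apply]

lemma pd_comp_apply_mul_comp_apply {a b : ℝ → ℝ} {a' b' : ℝ} {k l : Fin 4}
    (ha : HasDerivAt a a' (p k)) (hb : HasDerivAt b b' (p l)) (i : Fin 4) :
    pd i (fun q => a (q k) * b (q l)) p
      = (if k = i then a' * b (p l) else 0) + (if l = i then a (p k) * b' else 0) := by
  rw [pd, ((hasFDerivAt_comp_apply ha).fun_mul (hasFDerivAt_comp_apply hb)).fderiv]
  simp [Pi.single_apply]
  split_ifs <;> ring

end PartialDerivatives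

section MetricAndChristoffelEntries

variable {M e Λ : ℝ} {p : Fin 4 → ℝ}

lemma pd_neg_fRN (hr : p 1 ≠ 0) (i : Fin 4) :
    pd i (fun q => -fRN M e Λ (q 1)) p = if (1 : Fin 4) = i then -fRN' M e Λ (p 1) else 0 :=
  pd_comp_apply (hasDerivAt_fRN hr).neg i

lemma pd_inv_fRN (hr : p 1 ≠ 0) (hf : fRN M e Λ (p 1) ≠ 0) (i : Fin 4) :
    pd i (fun q => (fRN M e Λ (q 1))⁻¹) p
      = if (1 : Fin 4) = i then -fRN' M e Λ (p 1) / fRN M e Λ (p 1) ^ 2 else 0 :=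
  pd_comp_apply ((hasDerivAt_fRN hr).inv hf) i

lemma pd_radius_sq (i : Fin 4) :
    pd i (fun q : Fin 4 → ℝ => q 1 ^ 2) p = if (1 : Fin 4) = i then 2 * p 1 else 0 := by
  simpa using pd_comp_apply (a := fun x => x ^ 2) (hasDerivAt_pow 2 (p 1)) i

lemma pd_radius_sq_mul_sin_sq (i : Fin 4) :
    pd i (fun q : Fin 4 → ℝ => q 1 ^ 2 * sin (q 2) ^ 2) p
      = (if (1 : Fin 4) = i then 2 * p 1 * sin (p 2) ^ 2 else 0)
        + (if (2 : Fin 4) = i then p 1 ^ 2 * (2 * sin (p 2) * cos (p 2)) else 0) := by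
  simpa using pd_comp_apply_mul_comp_apply (a := fun x => x ^ 2)
    (hasDerivAt_pow 2 (p 1)) (hasDerivAt_sin_sq (p 2)) i

lemma pd_neg_radius_mul_fRN (hr : p 1 ≠ 0) (i : Fin 4) :
    pd i (fun q : Fin 4 → ℝ => -(q 1 * fRN M e Λ (q 1))) p
      = if (1 : Fin 4) = i then -(fRN M e Λ (p 1) + p 1 * fRN' M e Λ (p 1)) else 0 := by
  simpa using pd_comp_apply (a := fun x => -(x * fRN M e Λ x))
    ((hasDerivAt_id (p 1)).mul (hasDerivAt_fRN hr)).neg i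

lemma pd_neg_radius_mul_fRN_mul_sin_sq (hr : p 1 ≠ 0) (i : Fin 4) :
    pd i (fun q : Fin 4 → ℝ => -(q 1 * fRN M e Λ (q 1) * sin (q 2) ^ 2)) p
      = (if (1 : Fin 4) = i then
          -(fRN M e Λ (p 1) + p 1 * fRN' M e Λ (p 1)) * sin (p 2) ^ 2 else 0)
        + (if (2 : Fin 4) = i then
          -(p 1 * fRN M e Λ (p 1)) * (2 * sin (p 2) * cos (p 2)) else 0) := by
  simpa using pd_comp_apply_mul_comp_apply (a := fun x => -(x * fRN M e Λ x))
    ((hasDerivAt_id (p 1)).mul (hasDerivAt_fRN hr)).neg (hasDerivAt_sin_sq (p 2)) i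

lemma pd_neg_sin_mul_cos (i : Fin 4) :
    pd i (fun q : Fin 4 → ℝ => -(sin (q 2) * cos (q 2))) p
      = if (2 : Fin 4) = i then sin (p 2) ^ 2 - cos (p 2) ^ 2 else 0 := by
  refine pd_comp_apply
    (((hasDerivAt_sin (p 2)).fun_mul (hasDerivAt_cos (p 2))).fun_neg.congr_deriv ?_) i
  ring

lemma pd_cos_div_sin (hs : sin (p 2) ≠ 0) (i : Fin 4) :
    pd i (fun q : Fin 4 → ℝ => cos (q 2) / sin (q 2)) p
      = if (2 : Fin 4) = i then -(1 / sin (p 2) ^ 2) else 0 := by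
  refine pd_comp_apply
    (((hasDerivAt_cos (p 2)).fun_div (hasDerivAt_sin (p 2)) hs).congr_deriv ?_) i
  field_simp
  linear_combination -sin_sq_add_cos_sq (p 2)

end MetricAndChristoffelEntries

/-- Entries are functions of the point rather than numbers, so that on the open domain, where
this table agrees with `Chr`, derivatives of `Chr` are read off entrywise. -/
noncomputable def chrClosedForm (M e Λ : ℝ) (k i j : Fin 4) : (Fin 4 → ℝ) → ℝ :=
  if k = 0 then
    (if (i = 0 ∧ j = 1) ∨ (i = 1 ∧ j = 0) then
        fun q => fRN' M e Λ (q 1) / (2 * fRN M e Λ (q 1)) else fun _ => 0)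
  else if k = 1 then
    (if i = 0 ∧ j = 0 then fun q => fRN M e Λ (q 1) * fRN' M e Λ (q 1) / 2
     else if i = 1 ∧ j = 1 then fun q => -(fRN' M e Λ (q 1) / (2 * fRN M e Λ (q 1)))
     else if i = 2 ∧ j = 2 then fun q => -(q 1 * fRN M e Λ (q 1))
     else if i = 3 ∧ j = 3 then fun q => -(q 1 * fRN M e Λ (q 1) * sin (q 2) ^ 2)
     else fun _ => 0)
  else if k = 2 then
    (if (i = 1 ∧ j = 2) ∨ (i = 2 ∧ j = 1) then fun q => (q 1)⁻¹
     else if i = 3 ∧ j = 3 then fun q => -(sin (q 2) * cos (q 2))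
     else fun _ => 0)
  else
    (if (i = 1 ∧ j = 3) ∨ (i = 3 ∧ j = 1) then fun q => (q 1)⁻¹
     else if (i = 2 ∧ j = 3) ∨ (i = 3 ∧ j = 2) then fun q => cos (q 2) / sin (q 2)
     else fun _ => 0)

lemma Chr_eq_chrClosedForm {M e Λ : ℝ} {q : Fin 4 → ℝ} (hr : q 1 ≠ 0)
    (hf : fRN M e Λ (q 1) ≠ 0) (hs : sin (q 2) ≠ 0) (k i j : Fin 4) :
    Chr M e Λ k i j q = chrClosedForm M e Λ k i j q := by
  fin_cases k <;> fin_cases i <;> fin_cases j <;>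
    simp [chrClosedForm, Chr, gInv, gMet, pd_neg_fRN hr, pd_inv_fRN hr hf,
      pd_radius_sq, pd_radius_sq_mul_sin_sq, pd_const] <;>
    field_simp

lemma pd_Chr_eq_pd_chrClosedForm {M e Λ : ℝ} {p : Fin 4 → ℝ} (hp : p ∈ RNdSDomain M e Λ)
    (k a i j : Fin 4) : pd k (Chr M e Λ a i j) p = pd k (chrClosedForm M e Λ a i j) p := by
  refine pd_congr ?_ k
  filter_upwards [(isOpen_RNdSDomain M e Λ).mem_nhds hp] with q hq
  exact Chr_eq_chrClosedForm hq.1.ne' hq.2.2.2 (sin_pos_of_mem_RNdSDomain hq).ne' a i j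

noncomputable def ricciθθ (e Λ r : ℝ) : ℝ := e ^ 2 / r ^ 2 + 3 * Λ * r ^ 2

lemma one_sub_fRN_sub_mul_fRN' {M e Λ r : ℝ} (hr : r ≠ 0) :
    1 - fRN M e Λ r - r * fRN' M e Λ r = ricciθθ e Λ r := by
  simp only [fRN, fRN', ricciθθ]
  field_simp
  ring

lemma ricciθθ_pos {e Λ r : ℝ} (he : e ≠ 0) (hΛ : 0 ≤ Λ) (hr : r ≠ 0) : 0 < ricciθθ e Λ r := by
  unfold ricciθθ
  positivity

lemma differentiableAt_ricciθθ {e Λ r : ℝ} (hr : r ≠ 0) :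
    DifferentiableAt ℝ (ricciθθ e Λ) r := by
  unfold ricciθθ
  fun_prop (disch := simp [hr])

section Ricci

variable {M e Λ : ℝ} {p : Fin 4 → ℝ}

lemma RicT_two_two (hp : p ∈ RNdSDomain M e Λ) : RicT M e Λ p 2 2 = ricciθθ e Λ (p 1) := by
  have hr : p 1 ≠ 0 := hp.1.ne'
  have hf : fRN M e Λ (p 1) ≠ 0 := hp.2.2.2
  have hs : sin (p 2) ≠ 0 := (sin_pos_of_mem_RNdSDomain hp).ne'
  simp [RicT, Riem, Fin.sum_univ_four, gInv, gMet, pd_Chr_eq_pd_chrClosedForm hp,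
    Chr_eq_chrClosedForm hr hf hs, chrClosedForm, pd_neg_radius_mul_fRN hr,
    pd_cos_div_sin hs, pd_const]
  rw [← one_sub_fRN_sub_mul_fRN' hr]
  field_simp
  linear_combination -2 * sin_sq_add_cos_sq (p 2)

lemma RicT_three_three (hp : p ∈ RNdSDomain M e Λ) :
    RicT M e Λ p 3 3 = ricciθθ e Λ (p 1) * sin (p 2) ^ 2 := by
  have hr : p 1 ≠ 0 := hp.1.ne'
  have hf : fRN M e Λ (p 1) ≠ 0 := hp.2.2.2
  have hs : sin (p 2) ≠ 0 := (sin_pos_of_mem_RNdSDomain hp).ne'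
  simp [RicT, Riem, Fin.sum_univ_four, gInv, gMet, pd_Chr_eq_pd_chrClosedForm hp,
    Chr_eq_chrClosedForm hr hf hs, chrClosedForm, pd_neg_radius_mul_fRN_mul_sin_sq hr,
    pd_neg_sin_mul_cos, pd_const]
  rw [← one_sub_fRN_sub_mul_fRN' hr]
  field_simp
  ring

lemma pd_two_RicT_two_two (hp : p ∈ RNdSDomain M e Λ) :
    pd 2 (fun q => RicT M e Λ q 2 2) p = 0 := by
  have h : (fun q => RicT M e Λ q 2 2) =ᶠ[𝓝 p] fun q => ricciθθ e Λ (q 1) :=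
    eventually_of_mem ((isOpen_RNdSDomain M e Λ).mem_nhds hp) fun q hq => RicT_two_two hq
  rw [pd_congr h, pd_comp_apply (differentiableAt_ricciθθ hp.1.ne').hasDerivAt]
  simp

lemma pd_two_RicT_three_three (hp : p ∈ RNdSDomain M e Λ) :
    pd 2 (fun q => RicT M e Λ q 3 3) p = ricciθθ e Λ (p 1) * (2 * sin (p 2) * cos (p 2)) := by
  have h : (fun q => RicT M e Λ q 3 3) =ᶠ[𝓝 p] fun q => ricciθθ e Λ (q 1) * sin (q 2) ^ 2 :=
    eventually_of_mem ((isOpen_RNdSDomain M e Λ).mem_nhds hp) fun q hq => RicT_three_three hq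
  rw [pd_congr h, pd_comp_apply_mul_comp_apply (differentiableAt_ricciθθ hp.1.ne').hasDerivAt
    (hasDerivAt_sin_sq (p 2))]
  simp

end Ricci

theorem rnds_no_ricci_inheritance_general (M e Λ : ℝ) (U : Set (Fin 4 → ℝ))
    (hsub : U ⊆ RNdSDomain M e Λ)
    (hΛ : 0 ≤ Λ) (he : e ≠ 0)
    (hpt : ∃ p ∈ U, p 2 ≠ Real.pi / 2 ∧ 3*Λ*(p 1)^4 ≠ e^2) :
    (¬ ∃ G : (Fin 4 → ℝ) → ℝ, ∀ p ∈ U, ∀ i j : Fin 4,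
        pd 2 (fun q => RicT M e Λ q i j) p = G p * RicT M e Λ p i j) ∧
    (¬ ∀ p ∈ U, ∀ i j : Fin 4, pd 2 (fun q => RicT M e Λ q i j) p = 0) := by
  obtain ⟨p, hpU, hθ, -⟩ := hpt
  have hp := hsub hpU
  have hRic : 0 < ricciθθ e Λ (p 1) := ricciθθ_pos he hΛ hp.1.ne'
  have hcos : cos (p 2) ≠ 0 := fun h => hθ <| injOn_cos ⟨hp.2.1.le, hp.2.2.1.le⟩
    ⟨by positivity, by linarith [pi_pos]⟩ (h.trans cos_pi_div_two.symm)
  have hφφ : pd 2 (fun q => RicT M e Λ q 3 3) p ≠ 0 := by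
    rw [pd_two_RicT_three_three hp]
    have hsin := sin_pos_of_mem_RNdSDomain hp
    positivity
  refine ⟨fun ⟨G, hG⟩ => hφφ ?_, fun h => hφφ (h p hpU 3 3)⟩
  have hG₀ : G p = 0 := by
    have hθθ := hG p hpU 2 2
    rw [pd_two_RicT_two_two hp, RicT_two_two hp] at hθθ
    exact (mul_eq_zero.1 hθθ.symm).resolve_right hRic.ne'
  rw [hG p hpU 3 3, hG₀, zero_mul]

/-- the RNdS spacetime admits neither Ricci inheritance nor Ricci
collineation with respect to ∂/∂θ. -/
theorem rnds_no_ricci_inheritance (M e Λ : ℝ) (U : Set (Fin 4 → ℝ))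
    (hU : U.Nonempty) (hconn : IsConnected U) (hopen : IsOpen U)
    (hsub : U ⊆ RNdSDomain M e Λ)
    (hΛ : 0 ≤ Λ) (he : e ≠ 0)
    (hpt : ∃ p ∈ U, p 2 ≠ Real.pi / 2 ∧ 3*Λ*(p 1)^4 ≠ e^2) :
    (¬ ∃ G : (Fin 4 → ℝ) → ℝ, ∀ p ∈ U, ∀ i j : Fin 4,
        pd 2 (fun q => RicT M e Λ q i j) p = G p * RicT M e Λ p i j) ∧
    (¬ ∀ p ∈ U, ∀ i j : Fin 4, pd 2 (fun q => RicT M e Λ q i j) p = 0) :=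
  rnds_no_ricci_inheritance_general M e Λ U hsub hΛ he hpt
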